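/- arXiv:2309.13540 — 3 statements merged into one kernel-verified Lean document; each statement's English description precedes it below -/
import Mathlib

section
/- Let φ be an automorphism of H × ℤ^k (k ≥ 1), where H = π₁(Σ_g) or H = F_g with g ≥ 2. Then there exist an automorphism α of H, an automorphism 𝓛 of ℤ^k, and a group homomorphism γ : H → ℤ^k such that φ(u, v) = (α(u), γ(u) + 𝓛(v)) for all (u, v) ∈ H × ℤ^k. -/
/-!
If `H` has trivial center, an automorphism of `H × ℤ^k` preserves the center `1 × ℤ^k`, so it is
block-triangular; applying the same to its inverse shows that the diagonal blocks are
automorphisms.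

Free groups of rank `≥ 2` and surface groups of genus `≥ 2` have trivial center because they are
HNN extensions with proper associated subgroups: by Britton's lemma, a central element of such an
extension is a central element of the base group lying in an associated subgroup. The free group
on `X` is the HNN extension of the free group on `X \ {x₀}` along the trivial subgroup.
`π₁(Σ_g)` is the HNN extension of the free group on the generators other than `a₁`, with stable
letter `a₁` conjugating `b₁` to `W⁻¹ b₁`, where `W = [a₂, b₂] ⋯ [a_g, b_g]`.
-/

def fixedSubgroup {G : Type*} [Group G] (φ : G →* G) : Subgroup G where
  carrier := {x | φ x = x}
  one_mem' := by simp
  mul_mem' := by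
    intro a b ha hb
    simp only [Set.mem_setOf_eq, map_mul] at *
    rw [ha, hb]
  inv_mem' := by
    intro a ha
    simp only [Set.mem_setOf_eq, map_inv] at *
    rw [ha]

open scoped commutatorElement

/-- The surface group π₁(Σ_g) = ⟨a₁,b₁,…,a_g,b_g ∣ [a₁,b₁]⋯[a_g,b_g] = 1⟩,
with generators `(i, true) = aᵢ` and `(i, false) = bᵢ`. -/
abbrev SurfaceGroup (g : ℕ) : Type :=
  PresentedGroup
    ({(List.ofFn fun i : Fin g =>
        ⁅FreeGroup.of (i, true), FreeGroup.of (i, false)⁆).prod} :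
      Set (FreeGroup (Fin g × Bool)))

/-- The rank of a group: the minimal cardinality of a generating set. -/
noncomputable def grpRank (G : Type*) [Group G] : Cardinal :=
  ⨅ S : {S : Set G // Subgroup.closure S = ⊤}, Cardinal.mk S.1

open Subgroup HNNExtension

section CommutatorProd

variable {G H : Type*} [Group G] [Group H] {n : ℕ}

def commutatorProd (a b : Fin n → G) : G := (List.ofFn fun i => ⁅a i, b i⁆).prod

theorem map_commutatorProd (f : G →* H) (a b : Fin n → G) :
    f (commutatorProd a b) = commutatorProd (fun i => f (a i)) (fun i => f (b i)) := by
  simp [commutatorProd, map_list_prod, List.map_ofFn, Function.comp_def, map_commutatorElement]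

theorem commutatorProd_succ (a b : Fin (n + 1) → G) :
    commutatorProd a b = ⁅a 0, b 0⁆ * commutatorProd (fun j => a j.succ) (fun j => b j.succ) := by
  simp [commutatorProd, List.ofFn_succ]

theorem commutatorProd_eq_one {G : Type*} [CommGroup G] (a b : Fin n → G) :
    commutatorProd a b = 1 :=
  List.prod_eq_one <| by simp [List.mem_ofFn, commutatorElement_eq_one_iff_commute, Commute.all]

theorem map_commutatorProd_eq_one {H : Type*} [CommGroup H] (f : G →* H) (a b : Fin n → G) :
    f (commutatorProd a b) = 1 := by
  rw [map_commutatorProd, commutatorProd_eq_one]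

theorem commutatorElement_mul_eq_one_iff {a b c : G} : ⁅a, b⁆ * c = 1 ↔ a * b * a⁻¹ = c⁻¹ * b := by
  rw [commutatorElement_def, mul_eq_one_iff_eq_inv, mul_inv_eq_iff_eq_mul]

end CommutatorProd

theorem Subgroup.zpowers_ne_top_of_map_eq_one {G H : Type*} [Group G] [Group H] (f : G →* H)
    {x y : G} (hx : f x = 1) (hy : f y ≠ 1) : zpowers x ≠ ⊤ := fun h =>
  hy <| (zpowers_le.2 (f.mem_ker.2 hx)) (h ▸ mem_top y)

theorem injective_zpowersHom {G : Type*} [Group G] {x : G} (hx : ¬IsOfFinOrder x) :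
    Function.Injective (zpowersHom G x) := fun a b h =>
  Multiplicative.toAdd.injective <| injective_zpow_iff_not_isOfFinOrder.2 hx (by simpa using h)

noncomputable def zpowersEquivOfNotIsOfFinOrder {G : Type*} [Group G] {x y : G}
    (hx : ¬IsOfFinOrder x) (hy : ¬IsOfFinOrder y) : zpowers x ≃* zpowers y :=
  ((MonoidHom.ofInjective (injective_zpowersHom hx)).trans
      (MulEquiv.subgroupCongr (range_zpowersHom x))).symm.trans
    ((MonoidHom.ofInjective (injective_zpowersHom hy)).trans
      (MulEquiv.subgroupCongr (range_zpowersHom y)))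

theorem zpowersEquivOfNotIsOfFinOrder_apply {G : Type*} [Group G] {x y : G}
    (hx : ¬IsOfFinOrder x) (hy : ¬IsOfFinOrder y) {a : zpowers x} {k : ℤ} (ha : (a : G) = x ^ k) :
    (zpowersEquivOfNotIsOfFinOrder hx hy a : G) = y ^ k := by
  have : ((MonoidHom.ofInjective (injective_zpowersHom hx)).trans
      (MulEquiv.subgroupCongr (range_zpowersHom x))).symm a = .ofAdd k := by
    rw [MulEquiv.symm_apply_eq]
    exact Subtype.ext (by simp [ha, MonoidHom.ofInjective_apply])
  simp [zpowersEquivOfNotIsOfFinOrder, this, MonoidHom.ofInjective_apply]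

theorem Subgroup.center_eq_bot_of_mulEquiv {G H : Type*} [Group G] [Group H] (e : G ≃* H)
    (h : center H = ⊥) : center G = ⊥ := by
  refine eq_bot_iff.2 fun z hz => ?_
  have : e z ∈ center H := MulEquivClass.apply_mem_center e hz
  rw [h, mem_bot] at this
  simpa using this

namespace HNNExtension

open NormalWord

variable {G : Type*} [Group G] {A B : Subgroup G} {φ : A ≃* B}

theorem NormalWord.ReducedWord.exists_prod_eq_conj (w : ReducedWord G A B) (hw : w.toList ≠ [])
    (x : G) : ∃ w' : ReducedWord G A B,
      w'.head = x * w.head ∧ w'.prod φ = of x * w.prod φ * (of x)⁻¹ := by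
  obtain ⟨L, p, hLp⟩ := (List.eq_nil_or_concat w.toList).resolve_left hw
  have hchain := w.chain
  rw [hLp, List.concat_eq_append, List.isChain_append] at hchain
  -- only the `G`-part of the last letter changes, and reducedness never depends on it
  refine ⟨⟨x * w.head, L ++ [(p.1, p.2 * x⁻¹)], List.isChain_append.2
    ⟨hchain.1, List.isChain_singleton _, fun a ha b hb => ?_⟩⟩, rfl, ?_⟩
  · simp only [List.head?_cons, Option.mem_def, Option.some.injEq] at hb
    subst hb
    exact hchain.2.2 a ha p rfl
  · simp [ReducedWord.prod, hLp, mul_assoc]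

theorem NormalWord.ReducedWord.toList_eq_nil_of_prod_mem_center (hA : A ≠ ⊤) (hB : B ≠ ⊤)
    (w : ReducedWord G A B) (hw : w.prod φ ∈ center (HNNExtension G A B φ)) :
    w.toList = [] := by
  by_contra hne
  obtain ⟨u, hu⟩ : ∃ u, u ∈ w.toList.head?.map Prod.fst :=
    ⟨_, Option.mem_map_of_mem _ (List.head?_eq_some_head hne)⟩
  -- conjugating by `w.head * y * w.head⁻¹` fixes the product and turns the head into
  -- `w.head * y`, so uniqueness of reduced forms puts `y` in `toSubgroup A B (-u)`
  have htop : toSubgroup A B (-u) = ⊤ := by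
    refine (eq_top_iff' _).2 fun y => ?_
    obtain ⟨w', hhead, hprod⟩ := w.exists_prod_eq_conj (φ := φ) hne (w.head * y * w.head⁻¹)
    rw [mem_center_iff.1 hw, mul_inv_cancel_right] at hprod
    simpa [hhead, mul_assoc] using (ReducedWord.map_fst_eq_and_of_prod_eq φ hprod.symm).2 u hu
  rcases Int.units_eq_one_or u with rfl | rfl
  · exact hB htop
  · exact hA htop

theorem NormalWord.ReducedWord.exists_prod_eq (z : HNNExtension G A B φ) :
    ∃ w : ReducedWord G A B, w.prod φ = z := by
  obtain ⟨d⟩ := TransversalPair.nonempty G A B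
  exact ⟨(NormalWord.equiv φ d z).toReducedWord, (NormalWord.equiv φ d).symm_apply_apply z⟩

theorem mem_right_of_of_mem_center {g : G} (hg : of g ∈ center (HNNExtension G A B φ)) :
    g ∈ B := by
  by_contra hgB
  -- `t⁻¹ g t` would be a reduced word with product `g`
  let w : ReducedWord G A B :=
    ⟨1, [(-1, g), (1, 1)], List.isChain_pair.2 fun hg' => absurd (by simpa using hg') hgB⟩
  have hw : w.prod φ = of g := by
    simp only [ReducedWord.prod, w, map_one, one_mul, List.map_cons, List.map_nil,
      List.prod_cons, List.prod_nil, mul_one, Units.val_neg, Units.val_one, zpow_neg, zpow_one]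
    rw [mul_assoc, ← mem_center_iff.1 hg t, inv_mul_cancel_left]
  simpa [w] using ReducedWord.toList_eq_nil_of_mem_of_range φ w (hw ▸ ⟨g, rfl⟩)

theorem center_le_map_of (hA : A ≠ ⊤) (hB : B ≠ ⊤) :
    center (HNNExtension G A B φ) ≤ (center G ⊓ B).map (of : G →* HNNExtension G A B φ) := by
  intro z hz
  obtain ⟨w, rfl⟩ := ReducedWord.exists_prod_eq z
  have hw : w.prod φ = of w.head := by
    simp [ReducedWord.prod, w.toList_eq_nil_of_prod_mem_center hA hB hz]
  rw [hw] at hz ⊢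
  refine ⟨w.head, ⟨mem_center_iff.2 fun x => of_injective (φ := φ) ?_,
    mem_right_of_of_mem_center hz⟩, rfl⟩
  simpa using mem_center_iff.1 hz (of x)

end HNNExtension

namespace FreeGroup

variable {X : Type*}

noncomputable def equivHNNExtension [DecidableEq X] (x₀ : X) :
    FreeGroup X ≃* HNNExtension (FreeGroup {x // x ≠ x₀}) ⊥ ⊥ (MulEquiv.refl _) :=
  MonoidHom.toMulEquiv (lift fun x => if h : x = x₀ then t else HNNExtension.of (of ⟨x, h⟩))
    (HNNExtension.lift (lift fun y => of y.1) (of x₀) fun a => by simp [mem_bot.1 a.2])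
    (ext_hom _ _ fun x => by by_cases h : x = x₀ <;> simp [h])
    (hom_ext (ext_hom _ _ fun y => by simp [y.2]) (by simp))

noncomputable def exponentSum [DecidableEq X] (y : X) : FreeGroup X →* Multiplicative ℤ :=
  lift (Pi.mulSingle y (.ofAdd 1))

theorem exponentSum_of [DecidableEq X] (y y' : X) :
    exponentSum y (of y') = if y' = y then .ofAdd 1 else 1 := by
  simp [exponentSum, Pi.mulSingle_apply]

theorem center_eq_bot [Nontrivial X] : center (FreeGroup X) = ⊥ := by
  classical
  obtain ⟨x₀, x₁, hne⟩ := exists_pair_ne X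
  have : Nonempty {x // x ≠ x₀} := ⟨⟨x₁, hne.symm⟩⟩
  refine center_eq_bot_of_mulEquiv (equivHNNExtension x₀) (eq_bot_iff.2 fun z hz => ?_)
  obtain ⟨g, ⟨-, hg⟩, rfl⟩ := center_le_map_of bot_ne_top bot_ne_top hz
  simp_all

end FreeGroup

namespace SurfaceGroup

open FreeGroup (exponentSum exponentSum_of)

variable (m : ℕ)

-- generator indices start at `0`, so `a₁` is `(0, true)` and `b₁` is `(0, false)`
abbrev BaseGen : Type := {p : Fin (m + 2) × Bool // p ≠ (0, true)}

def b₁ : FreeGroup (BaseGen m) := FreeGroup.of ⟨(0, false), by simp⟩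

def tailRelator : FreeGroup (BaseGen m) :=
  commutatorProd (fun j : Fin (m + 1) => FreeGroup.of ⟨(j.succ, true), by simp⟩)
    (fun j => FreeGroup.of ⟨(j.succ, false), by simp⟩)

instance : Nontrivial (BaseGen m) :=
  nontrivial_of_ne ⟨(0, false), by simp⟩ ⟨(1, true), by simp [Prod.ext_iff]⟩
    (by simp [Prod.ext_iff])

theorem not_isOfFinOrder_b₁ : ¬IsOfFinOrder (b₁ m) := by
  rw [isOfFinOrder_iff_eq_one]
  exact FreeGroup.of_ne_one _

theorem exponentSum_inv_tailRelator_mul_b₁ (y : BaseGen m) :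
    exponentSum y ((tailRelator m)⁻¹ * b₁ m) = exponentSum y (b₁ m) := by
  rw [map_mul, map_inv, tailRelator, map_commutatorProd_eq_one, inv_one, one_mul]

theorem not_isOfFinOrder_inv_tailRelator_mul_b₁ : ¬IsOfFinOrder ((tailRelator m)⁻¹ * b₁ m) := by
  rw [isOfFinOrder_iff_eq_one]
  intro h
  have := exponentSum_inv_tailRelator_mul_b₁ m ⟨(0, false), by simp⟩
  rw [h, map_one, eq_comm] at this
  simp [b₁, exponentSum_of] at this

noncomputable def stableIso : zpowers (b₁ m) ≃* zpowers ((tailRelator m)⁻¹ * b₁ m) :=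
  zpowersEquivOfNotIsOfFinOrder (not_isOfFinOrder_b₁ m) (not_isOfFinOrder_inv_tailRelator_mul_b₁ m)

abbrev HNN : Type :=
  HNNExtension (FreeGroup (BaseGen m)) (zpowers (b₁ m)) (zpowers ((tailRelator m)⁻¹ * b₁ m))
    (stableIso m)

theorem center_HNN_eq_bot : center (HNN m) = ⊥ := by
  let a₂ : BaseGen m := ⟨(1, true), by simp [Prod.ext_iff]⟩
  have ha₂ : exponentSum a₂ (FreeGroup.of a₂) ≠ 1 := by simp [exponentSum_of]
  have hb₁ : exponentSum a₂ (b₁ m) = 1 := by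
    simp [b₁, exponentSum_of, a₂, Prod.ext_iff]
  have hA : zpowers (b₁ m) ≠ ⊤ := zpowers_ne_top_of_map_eq_one _ hb₁ ha₂
  have hB : zpowers ((tailRelator m)⁻¹ * b₁ m) ≠ ⊤ := zpowers_ne_top_of_map_eq_one _
    ((exponentSum_inv_tailRelator_mul_b₁ m a₂).trans hb₁) ha₂
  refine eq_bot_iff.2 fun z hz => ?_
  obtain ⟨g, ⟨hg, -⟩, rfl⟩ := center_le_map_of hA hB hz
  rw [FreeGroup.center_eq_bot] at hg
  simp_all

theorem commutator_a₁_b₁_mul_commutatorProd :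
    ⁅(PresentedGroup.of (0, true) : SurfaceGroup (m + 2)), PresentedGroup.of (0, false)⁆ *
      commutatorProd
        (fun j : Fin (m + 1) => (PresentedGroup.of (j.succ, true) : SurfaceGroup (m + 2)))
        (fun j => PresentedGroup.of (j.succ, false)) = 1 := by
  rw [← commutatorProd_succ (fun i => PresentedGroup.of (i, true))
    (fun i => PresentedGroup.of (i, false))]
  exact (map_commutatorProd (PresentedGroup.mk _) _ _).symm.trans
    (PresentedGroup.one_of_mem rfl)

noncomputable def toHNNGen (p : Fin (m + 2) × Bool) : HNN m :=
  if h : p = (0, true) then t else of (FreeGroup.of ⟨p, h⟩)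

theorem toHNNGen_a₁ : toHNNGen m (0, true) = t := dif_pos rfl

theorem toHNNGen_b₁ : toHNNGen m (0, false) = of (b₁ m) := dif_neg (by simp)

theorem of_tailRelator : (of (tailRelator m) : HNN m) =
    commutatorProd (fun j : Fin (m + 1) => toHNNGen m (j.succ, true))
      (fun j => toHNNGen m (j.succ, false)) := by
  refine (map_commutatorProd of _ _).trans ?_
  simp [toHNNGen]

theorem t_mul_of_b₁ : (t : HNN m) * of (b₁ m) = of ((tailRelator m)⁻¹ * b₁ m) * t := by
  have := t_mul_of (φ := stableIso m) ⟨b₁ m, mem_zpowers _⟩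
  rwa [stableIso, zpowersEquivOfNotIsOfFinOrder_apply _ _ (k := 1) (by simp), zpow_one] at this

noncomputable def toHNN : SurfaceGroup (m + 2) →* HNN m :=
  PresentedGroup.toGroup (f := toHNNGen m) <| by
    rintro r rfl
    change FreeGroup.lift _ (commutatorProd _ _) = 1
    rw [map_commutatorProd, commutatorProd_succ]
    simp only [FreeGroup.lift_apply_of]
    rw [← of_tailRelator, toHNNGen_a₁, toHNNGen_b₁, commutatorElement_mul_eq_one_iff, ← map_inv,
      ← map_mul, t_mul_of_b₁, mul_inv_cancel_right]

noncomputable def baseToSurface : FreeGroup (BaseGen m) →* SurfaceGroup (m + 2) :=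
  FreeGroup.lift fun y => PresentedGroup.of y.1

theorem conj_baseToSurface_b₁ :
    PresentedGroup.of (0, true) * baseToSurface m (b₁ m) * (PresentedGroup.of (0, true))⁻¹ =
      baseToSurface m ((tailRelator m)⁻¹ * b₁ m) := by
  have h := commutator_a₁_b₁_mul_commutatorProd m
  have hT : baseToSurface m (tailRelator m) = commutatorProd
      (fun j : Fin (m + 1) => (PresentedGroup.of (j.succ, true) : SurfaceGroup (m + 2)))
      (fun j => PresentedGroup.of (j.succ, false)) :=
    (map_commutatorProd _ _ _).trans (by simp [baseToSurface])
  rw [map_mul, map_inv, hT, ← commutatorElement_mul_eq_one_iff]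
  exact h

noncomputable def ofHNN : HNN m →* SurfaceGroup (m + 2) :=
  HNNExtension.lift (baseToSurface m) (PresentedGroup.of (0, true)) fun a => by
    obtain ⟨k, hk⟩ := mem_zpowers_iff.1 a.2
    rw [stableIso, zpowersEquivOfNotIsOfFinOrder_apply _ _ hk.symm, ← hk, map_zpow, map_zpow,
      ← conj_baseToSurface_b₁, conj_zpow]
    group

noncomputable def equivHNN : SurfaceGroup (m + 2) ≃* HNN m :=
  MonoidHom.toMulEquiv (toHNN m) (ofHNN m)
    (PresentedGroup.ext fun p => by
      by_cases h : p = (0, true) <;> simp [toHNN, toHNNGen, ofHNN, baseToSurface, h])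
    (hom_ext (FreeGroup.ext_hom _ _ fun y => by simp [toHNN, toHNNGen, ofHNN, baseToSurface, y.2])
      (by simp [toHNN, toHNNGen, ofHNN]))

end SurfaceGroup

theorem SurfaceGroup.center_eq_bot {g : ℕ} (hg : 2 ≤ g) : center (SurfaceGroup g) = ⊥ := by
  obtain ⟨m, rfl⟩ := Nat.exists_eq_add_of_le' hg
  exact center_eq_bot_of_mulEquiv (SurfaceGroup.equivHNN m) (SurfaceGroup.center_HNN_eq_bot m)

theorem MulEquiv.fst_apply_one_eq_one {H A : Type*} [Group H] [CommGroup A]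
    (hH : center H = ⊥) (φ : H × A ≃* H × A) (v : A) : (φ (1, v)).1 = 1 := by
  have hv : ((1, v) : H × A) ∈ center (H × A) := by
    rw [Subgroup.center_prod, CommGroup.center_eq_top]
    exact ⟨one_mem _, mem_top v⟩
  have : φ (1, v) ∈ center (H × A) := MulEquivClass.apply_mem_center φ hv
  rw [Subgroup.center_prod, hH] at this
  exact mem_bot.1 this.1

namespace MonoidHom

variable {H A : Type*} [Group H] [Group A] (φ ψ : H × A →* H × A)

def fstInl : H →* H := (fst H A).comp (φ.comp (inl H A))

def sndInl : H →* A := (snd H A).comp (φ.comp (inl H A))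

def sndInr : A →* A := (snd H A).comp (φ.comp (inr H A))

variable {φ ψ}

theorem apply_eq_fstInl_sndInl_sndInr (hφ : ∀ v, (φ (1, v)).1 = 1) (u : H) (v : A) :
    φ (u, v) = (φ.fstInl u, φ.sndInl u * φ.sndInr v) := by
  rw [show (u, v) = ((u, 1) * (1, v) : H × A) by simp, map_mul]
  ext <;> simp [fstInl, sndInl, sndInr, hφ]

theorem fstInl_comp (hψ : ∀ v, (ψ (1, v)).1 = 1) : (ψ.comp φ).fstInl = ψ.fstInl.comp φ.fstInl := by
  ext u
  change (ψ (φ (u, 1))).1 = ψ.fstInl (φ (u, 1)).1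
  rw [← Prod.mk.eta (p := φ (u, 1)), apply_eq_fstInl_sndInl_sndInr hψ]

theorem sndInr_comp (hφ : ∀ v, (φ (1, v)).1 = 1) : (ψ.comp φ).sndInr = ψ.sndInr.comp φ.sndInr := by
  ext v
  change (ψ (φ (1, v))).2 = (ψ (1, (φ (1, v)).2)).2
  rw [show ((1 : H), (φ (1, v)).2) = φ (1, v) from Prod.ext (hφ v).symm rfl]

theorem fstInl_id : (MonoidHom.id (H × A)).fstInl = MonoidHom.id H := by
  ext; simp [fstInl]

theorem sndInr_id : (MonoidHom.id (H × A)).sndInr = MonoidHom.id A := by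
  ext; simp [sndInr]

end MonoidHom

theorem MulEquiv.exists_prod_apply_eq {H A : Type*} [Group H] [CommGroup A]
    (hH : center H = ⊥) (φ : H × A ≃* H × A) :
    ∃ (α : H ≃* H) (L : A ≃* A) (γ : H →* A), ∀ u v, φ (u, v) = (α u, γ u * L v) := by
  let f : H × A →* H × A := φ
  let g : H × A →* H × A := φ.symm
  have hf : ∀ v, (f (1, v)).1 = 1 := φ.fst_apply_one_eq_one hH
  have hg : ∀ v, (g (1, v)).1 = 1 := φ.symm.fst_apply_one_eq_one hH
  have hgf : g.comp f = .id _ := MonoidHom.ext φ.symm_apply_apply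
  have hfg : f.comp g = .id _ := MonoidHom.ext φ.apply_symm_apply
  refine ⟨f.fstInl.toMulEquiv g.fstInl ?_ ?_, f.sndInr.toMulEquiv g.sndInr ?_ ?_, f.sndInl,
    MonoidHom.apply_eq_fstInl_sndInl_sndInr hf⟩
  · rw [← MonoidHom.fstInl_comp hg, hgf, MonoidHom.fstInl_id]
  · rw [← MonoidHom.fstInl_comp hf, hfg, MonoidHom.fstInl_id]
  · rw [← MonoidHom.sndInr_comp hf, hgf, MonoidHom.sndInr_id]
  · rw [← MonoidHom.sndInr_comp hg, hfg, MonoidHom.sndInr_id]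

theorem stmt9_general (g k : ℕ) (hg : 2 ≤ g) (H : Type) [Group H]
    (hH : Nonempty (H ≃* SurfaceGroup g) ∨ Nonempty (H ≃* FreeGroup (Fin g)))
    (φ : (H × Multiplicative (Fin k → ℤ)) ≃* (H × Multiplicative (Fin k → ℤ))) :
    ∃ (α : H ≃* H) (L : Multiplicative (Fin k → ℤ) ≃* Multiplicative (Fin k → ℤ))
      (γ : H →* Multiplicative (Fin k → ℤ)),
      ∀ (u : H) (v : Multiplicative (Fin k → ℤ)),
        φ (u, v) = (α u, γ u * L v) := by
  have hcenter : center H = ⊥ := by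
    rcases hH with ⟨⟨e⟩⟩ | ⟨⟨e⟩⟩
    · exact center_eq_bot_of_mulEquiv e (SurfaceGroup.center_eq_bot hg)
    · have : Nontrivial (Fin g) := Fin.nontrivial_iff_two_le.2 hg
      exact center_eq_bot_of_mulEquiv e FreeGroup.center_eq_bot
  exact φ.exists_prod_apply_eq hcenter

theorem stmt9 (g k : ℕ) (hg : 2 ≤ g) (hk : 1 ≤ k) (H : Type) [Group H]
    (hH : Nonempty (H ≃* SurfaceGroup g) ∨ Nonempty (H ≃* FreeGroup (Fin g)))
    (φ : (H × Multiplicative (Fin k → ℤ)) ≃* (H × Multiplicative (Fin k → ℤ))) :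
    ∃ (α : H ≃* H) (L : Multiplicative (Fin k → ℤ) ≃* Multiplicative (Fin k → ℤ))
      (γ : H →* Multiplicative (Fin k → ℤ)),
      ∀ (u : H) (v : Multiplicative (Fin k → ℤ)),
        φ (u, v) = (α u, γ u * L v) :=
  stmt9_general g k hg H hH φ
end

section
/- Let g ≥ 2. For every integer t ≥ 0, both F_t and F_t × ℤ are aut-fixed up to isomorphism in F_g × ℤ²: there exist automorphisms φ_t and ψ_t of F_g × ℤ² with Fix φ_t ≅ F_t and Fix ψ_t ≅ F_t × ℤ. -/
open scoped commutatorElement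

/-!
Let `f` invert the generators `x_n, …, x_{g-1}` of `F_g` and fix `x_0, …, x_{n-1}`; a reduced word
is fixed by `f` only if it avoids the inverted letters, so `Fix f = F_n`. For `A ∈ SL₂(ℤ)` and
`ε : F_g → ℤ` the exponent sum of `x_0`, the automorphism `(y, v) ↦ (f y, A v + (0, ε y))` of
`F_g × ℤ²` fixes `(y, v)` iff `y ∈ F_n` and `(1 - A) v = (0, ε y)`. For `A = !![1, 1; -k, 1 - k]`
this says `v₁ = 0` and `ε y = k v₀`, so the fixed subgroup is `{y ∈ F_n | k ∣ ε y}`; for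
`B = !![1, 0; -k, 1]` the coordinate `v₁` is free and contributes a factor `ℤ`.

Taking `n = t ≤ 1` and `k = 1` gives `F_t`. For `t ≥ 2` take `n = 2` and `k = t - 1`: writing
`F_2 = F(ℤ) ⋊ ℤ`, where `ℤ` shifts the free basis `aⁱ b a⁻ⁱ` of `ker ε`, the subgroup `{k ∣ ε}` is
`F(ℤ) ⋊ kℤ ≅ F(ℤ × Fin k) ⋊ ℤ` (reindexing by `i ↦ (i / k, i % k)`), which is free of rank `k + 1`.
-/

open Multiplicative SemidirectProduct

theorem mem_fixedSubgroup {G : Type*} [Group G] {φ : G →* G} {x : G} :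
    x ∈ fixedSubgroup φ ↔ φ x = x := Iff.rfl

theorem mem_zpowers_ofAdd_iff {k : ℤ} {c : Multiplicative ℤ} :
    c ∈ Subgroup.zpowers (ofAdd k) ↔ k ∣ c.toAdd := by
  rw [Subgroup.mem_zpowers_iff, dvd_iff_exists_eq_mul_left]
  refine exists_congr fun m => ?_
  rw [← ofAdd_zsmul, smul_eq_mul, eq_comm]
  exact ⟨congrArg toAdd, congrArg ofAdd⟩

namespace FreeGroup

section InvertOff

variable {β : Type*}

theorem mk_singleton_eq (l : β × Bool) : mk [l] = cond l.2 (of l.1) (of l.1)⁻¹ := by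
  obtain ⟨i, _ | _⟩ := l
  · rw [of, inv_mk]; rfl
  · rfl

theorem mk_mem_closure_image_of {s : Set β} {L : List (β × Bool)} (hL : ∀ l ∈ L, l.1 ∈ s) :
    mk L ∈ Subgroup.closure (of '' s) := by
  induction L with
  | nil => exact Subgroup.one_mem _
  | cons l L ih =>
    rw [← List.singleton_append, ← mul_mk, mk_singleton_eq]
    have hl : of l.1 ∈ Subgroup.closure (of '' s) :=
      Subgroup.subset_closure ⟨l.1, hL l List.mem_cons_self, rfl⟩
    refine Subgroup.mul_mem _ ?_ (ih fun m hm => hL m (List.mem_cons_of_mem _ hm))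
    cases l.2
    · exact Subgroup.inv_mem _ hl
    · exact hl

variable (s : Set β) [DecidablePred (· ∈ s)]

def invertOff : MulAut (FreeGroup β) :=
  have h : (lift fun i => if i ∈ s then of i else (of i)⁻¹).comp
      (lift fun i => if i ∈ s then of i else (of i)⁻¹) = MonoidHom.id _ :=
    ext_hom _ _ fun i => by by_cases hi : i ∈ s <;> simp [hi]
  MonoidHom.toMulEquiv _ _ h h

def invertOffLetter (l : β × Bool) : β × Bool :=
  if l.1 ∈ s then l else (l.1, !l.2)

@[simp]
theorem invertOffLetter_fst (l : β × Bool) : (invertOffLetter s l).1 = l.1 := by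
  unfold invertOffLetter; split <;> rfl

theorem invertOff_mk (L : List (β × Bool)) :
    invertOff s (mk L) = mk (L.map (invertOffLetter s)) := by
  induction L with
  | nil => rfl
  | cons l L ih =>
    rw [← List.singleton_append, ← mul_mk, _root_.map_mul, ih, List.map_append, ← mul_mk]
    congr 1
    obtain ⟨i, b⟩ := l
    by_cases hi : i ∈ s <;> cases b <;> simp [invertOff, invertOffLetter, hi, mk_singleton_eq]

theorem IsReduced.map_invertOffLetter {L : List (β × Bool)} (hL : IsReduced L) :
    IsReduced (L.map (invertOffLetter s)) := by
  refine (List.isChain_map _).2 (hL.imp fun a b hab h => ?_)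
  rw [invertOffLetter_fst, invertOffLetter_fst] at h
  rw [Prod.ext h (hab h)]

theorem toWord_invertOff [DecidableEq β] (x : FreeGroup β) :
    (invertOff s x).toWord = x.toWord.map (invertOffLetter s) := by
  rw [← mk_toWord (x := x), invertOff_mk, toWord_mk, toWord_mk, reduce_toWord]
  exact (isReduced_toWord.map_invertOffLetter s).reduce_eq

theorem fixedSubgroup_invertOff :
    fixedSubgroup (invertOff s).toMonoidHom = Subgroup.closure (of '' s) := by
  classical
  refine le_antisymm (fun x hx => ?_) ((Subgroup.closure_le _).2 ?_)
  · rw [← mk_toWord (x := x)]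
    refine mk_mem_closure_image_of fun l hl => ?_
    have h := congrArg toWord (mem_fixedSubgroup.1 hx)
    rw [MulEquiv.coe_toMonoidHom, toWord_invertOff] at h
    conv_rhs at h => rw [← List.map_id x.toWord]
    have hl' := List.map_inj_left.1 h l hl
    by_contra hls
    simp [invertOffLetter, hls, Prod.ext_iff] at hl'
  · rintro _ ⟨i, hi, rfl⟩
    simp [mem_fixedSubgroup, invertOff, hi]

end InvertOff

def firstExponentSum (n : ℕ) : FreeGroup (Fin n) →* Multiplicative ℤ :=
  lift fun i => if (i : ℕ) = 0 then ofAdd 1 else 1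

theorem firstExponentSum_comp_map_castLE {n g : ℕ} (h : n ≤ g) :
    (firstExponentSum g).comp (map (Fin.castLE h)) = firstExponentSum n :=
  ext_hom _ _ fun i => by simp [firstExponentSum]

section ShiftSemidirect

variable (R : Type*)

def shiftAut : Multiplicative ℤ →* MulAut (FreeGroup (ℤ × R)) where
  toFun n := freeGroupCongr ((Equiv.addRight n.toAdd).prodCongr (Equiv.refl R))
  map_one' := by ext; simp
  map_mul' m n := MulEquiv.toMonoidHom_injective <|
    ext_hom _ _ fun ⟨i, r⟩ => by simp [add_left_comm, add_comm]

variable {R}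

@[simp]
theorem shiftAut_of (n : Multiplicative ℤ) (i : ℤ) (r : R) :
    shiftAut R n (of (i, r)) = of (i + n.toAdd, r) := by
  simp [shiftAut]

def toShiftSemidirect :
    FreeGroup (Option R) →* FreeGroup (ℤ × R) ⋊[shiftAut R] Multiplicative ℤ :=
  lift fun o => o.elim (inr (ofAdd 1)) fun r => inl (of (0, r))

def ofShiftSemidirect :
    FreeGroup (ℤ × R) ⋊[shiftAut R] Multiplicative ℤ →* FreeGroup (Option R) :=
  SemidirectProduct.lift (lift fun p => of none ^ p.1 * of (some p.2) * (of none ^ p.1)⁻¹)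
    (zpowersHom _ (of none)) fun n => by
      ext ⟨i, r⟩
      simp only [MonoidHom.comp_apply, MulEquiv.coe_toMonoidHom, shiftAut_of, lift_apply_of,
        zpowersHom_apply, MulAut.conj_apply, _root_.map_mul, _root_.map_inv]
      rw [zpow_add]
      group

theorem ofShiftSemidirect_comp_toShiftSemidirect :
    ofShiftSemidirect.comp toShiftSemidirect = MonoidHom.id (FreeGroup (Option R)) :=
  ext_hom _ _ fun o => by cases o <;> simp [toShiftSemidirect, ofShiftSemidirect]

theorem toShiftSemidirect_comp_ofShiftSemidirect :
    toShiftSemidirect.comp ofShiftSemidirect =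
      MonoidHom.id (FreeGroup (ℤ × R) ⋊[shiftAut R] Multiplicative ℤ) := by
  refine SemidirectProduct.hom_ext (ext_hom _ _ fun ⟨i, r⟩ => ?_) (MonoidHom.ext_mint ?_)
  · have h := inl_aut (φ := shiftAut R) (ofAdd i) (of (0, r))
    have hi : (inr (ofAdd 1) : FreeGroup (ℤ × R) ⋊[shiftAut R] Multiplicative ℤ) ^ i =
        inr (ofAdd i) := by
      rw [← map_zpow, ← ofAdd_zsmul, zsmul_one]; rfl
    simp only [shiftAut_of, toAdd_ofAdd, zero_add, _root_.map_inv] at h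
    simp [toShiftSemidirect, ofShiftSemidirect, h, hi]
  · simp [toShiftSemidirect, ofShiftSemidirect]

def equivShiftSemidirect :
    FreeGroup (Option R) ≃* FreeGroup (ℤ × R) ⋊[shiftAut R] Multiplicative ℤ :=
  MonoidHom.toMulEquiv _ _ ofShiftSemidirect_comp_toShiftSemidirect
    toShiftSemidirect_comp_ofShiftSemidirect

def finShiftEquiv (n : ℕ) :
    FreeGroup (Fin (n + 1)) ≃* FreeGroup (ℤ × Fin n) ⋊[shiftAut (Fin n)] Multiplicative ℤ :=
  (freeGroupCongr (finSuccEquiv n)).trans equivShiftSemidirect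

theorem rightHom_finShiftEquiv_one (x : FreeGroup (Fin 2)) :
    rightHom (finShiftEquiv 1 x) = firstExponentSum 2 x := by
  refine DFunLike.congr_fun (ext_hom (rightHom.comp (finShiftEquiv 1).toMonoidHom) _ ?_) x
  simp [Fin.forall_fin_succ, finShiftEquiv, equivShiftSemidirect, toShiftSemidirect,
    firstExponentSum]

variable (k : ℕ) [NeZero k]

def divModProdEquiv : ℤ × Fin k ≃ ℤ × Fin 1 :=
  (Int.divModEquiv k).symm.trans (Equiv.prodUnique ℤ (Fin 1)).symm

theorem divModProdEquiv_apply (q : ℤ) (r : Fin k) :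
    divModProdEquiv k (q, r) = (q * k + r, 0) := rfl

def semidirectPowHom : FreeGroup (ℤ × Fin k) ⋊[shiftAut (Fin k)] Multiplicative ℤ →*
    FreeGroup (ℤ × Fin 1) ⋊[shiftAut (Fin 1)] Multiplicative ℤ :=
  SemidirectProduct.map (freeGroupCongr (divModProdEquiv k)).toMonoidHom (powMonoidHom k) fun n =>
    ext_hom _ _ fun ⟨q, r⟩ => by
      simp only [MonoidHom.comp_apply, MulEquiv.coe_toMonoidHom, freeGroupCongr_apply, map.of,
        shiftAut_of, divModProdEquiv_apply, powMonoidHom_apply, toAdd_pow, nsmul_eq_mul]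
      congr 2
      ring

theorem semidirectPowHom_injective : Function.Injective (semidirectPowHom k) := by
  intro x y h
  obtain ⟨hl, hr⟩ := SemidirectProduct.ext_iff.1 h
  exact SemidirectProduct.ext ((freeGroupCongr _).injective hl)
    (IsMulTorsionFree.pow_left_injective (NeZero.ne k) hr)

theorem range_semidirectPowHom :
    (semidirectPowHom k).range = (Subgroup.zpowers (ofAdd (k : ℤ))).comap rightHom := by
  ext y
  rw [Subgroup.mem_comap, mem_zpowers_ofAdd_iff, MonoidHom.mem_range]
  constructor
  · rintro ⟨x, rfl⟩
    exact ⟨x.right.toAdd, by simp [semidirectPowHom]⟩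
  · rintro ⟨m, hm⟩
    refine ⟨⟨(freeGroupCongr (divModProdEquiv k)).symm y.left, ofAdd m⟩,
      SemidirectProduct.ext ?_ ?_⟩
    · exact (freeGroupCongr (divModProdEquiv k)).apply_symm_apply y.left
    · show ofAdd m ^ k = y.right
      exact toAdd.injective (by simpa using hm.symm)

def indexSubgroupEmbedding : FreeGroup (Fin (k + 1)) →* FreeGroup (Fin 2) :=
  (finShiftEquiv 1).symm.toMonoidHom.comp <|
    (semidirectPowHom k).comp (finShiftEquiv k).toMonoidHom

theorem indexSubgroupEmbedding_injective : Function.Injective (indexSubgroupEmbedding k) :=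
  (finShiftEquiv 1).symm.injective.comp <|
    (semidirectPowHom_injective k).comp (finShiftEquiv k).injective

theorem range_indexSubgroupEmbedding :
    (indexSubgroupEmbedding k).range =
      (Subgroup.zpowers (ofAdd (k : ℤ))).comap (firstExponentSum 2) := by
  ext y
  rw [Subgroup.mem_comap, ← rightHom_finShiftEquiv_one, ← Subgroup.mem_comap,
    ← range_semidirectPowHom]
  simp only [MonoidHom.mem_range, indexSubgroupEmbedding, MonoidHom.comp_apply,
    MulEquiv.coe_toMonoidHom, MulEquiv.symm_apply_eq]
  exact ((finShiftEquiv k).surjective.exists (p := fun z => semidirectPowHom k z = _)).symm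

end ShiftSemidirect

theorem exists_comap_firstExponentSum_equiv (t : ℕ) :
    ∃ n ≤ 2, ∃ k : ℤ, k ≠ 0 ∧
      Nonempty ((Subgroup.zpowers (ofAdd k)).comap (firstExponentSum n) ≃* FreeGroup (Fin t)) := by
  rcases Nat.lt_or_ge t 2 with ht | ht
  · have h : (Subgroup.zpowers (ofAdd (1 : ℤ))).comap (firstExponentSum t) = ⊤ := by
      ext; simp [mem_zpowers_ofAdd_iff]
    exact ⟨t, ht.le, 1, one_ne_zero, ⟨(MulEquiv.subgroupCongr h).trans Subgroup.topEquiv⟩⟩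
  · obtain ⟨k, rfl⟩ := Nat.exists_eq_add_of_le' (Nat.one_le_of_lt ht)
    have : NeZero k := ⟨by omega⟩
    exact ⟨2, le_rfl, k, by exact_mod_cast NeZero.ne k,
      ⟨(MulEquiv.subgroupCongr (range_indexSubgroupEmbedding k).symm).trans
        (MonoidHom.ofInjective (indexSubgroupEmbedding_injective k)).symm⟩⟩

end FreeGroup

section SkewProd

variable {G V : Type*} [Group G] [CommGroup V]

def MulEquiv.skewProd (f : G ≃* G) (A : V ≃* V) (ℓ : G →* V) : G × V ≃* G × V where
  toFun x := (f x.1, A x.2 * ℓ x.1)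
  invFun x := (f.symm x.1, A.symm (x.2 * (ℓ (f.symm x.1))⁻¹))
  left_inv x := by simp
  right_inv x := by simp
  map_mul' x y := by
    simp only [Prod.fst_mul, Prod.snd_mul, map_mul, Prod.mk_mul_mk]
    rw [mul_mul_mul_comm]

theorem mem_fixedSubgroup_skewProd {f : G ≃* G} {A : V ≃* V} {ℓ : G →* V} {x : G × V} :
    x ∈ fixedSubgroup (f.skewProd A ℓ).toMonoidHom ↔ f x.1 = x.1 ∧ A x.2 * ℓ x.1 = x.2 :=
  Prod.ext_iff

end SkewProd

namespace Matrix.SpecialLinearGroup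

variable {ι R : Type*} [Fintype ι] [DecidableEq ι] [CommRing R]

def toMulAut (M : SpecialLinearGroup ι R) : MulAut (Multiplicative (ι → R)) :=
  (toLin' M).toAddEquiv.toMultiplicative

theorem toAdd_toMulAut (M : SpecialLinearGroup ι R) (v : Multiplicative (ι → R)) :
    (M.toMulAut v).toAdd = M *ᵥ v.toAdd := rfl

end Matrix.SpecialLinearGroup

section Shears

open Matrix

-- `det (1 - matA k) = k`: this is where the index `k` of the fixed subgroup comes from.
def matA (k : ℤ) : SpecialLinearGroup (Fin 2) ℤ :=
  ⟨!![1, 1; -k, 1 - k], by simp [det_fin_two]⟩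

def matB (k : ℤ) : SpecialLinearGroup (Fin 2) ℤ :=
  ⟨!![1, 0; -k, 1], by simp [det_fin_two]⟩

def secondCoord : Multiplicative ℤ →* Multiplicative (Fin 2 → ℤ) :=
  (AddMonoidHom.single (fun _ => ℤ) 1).toMultiplicative

theorem matA_mul_secondCoord_eq_iff (k : ℤ) (v : Multiplicative (Fin 2 → ℤ))
    (c : Multiplicative ℤ) :
    (matA k).toMulAut v * secondCoord c = v ↔ v.toAdd 1 = 0 ∧ c.toAdd = k * v.toAdd 0 := by
  have e0 : ((matA k).toMulAut v * secondCoord c).toAdd 0 = v.toAdd 0 + v.toAdd 1 := by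
    rw [toAdd_mul, Pi.add_apply, SpecialLinearGroup.toAdd_toMulAut]
    simp [matA, secondCoord, vecHead, vecTail]
  have e1 : ((matA k).toMulAut v * secondCoord c).toAdd 1 =
      -(k * v.toAdd 0) + (1 - k) * v.toAdd 1 + c.toAdd := by
    rw [toAdd_mul, Pi.add_apply, SpecialLinearGroup.toAdd_toMulAut]
    simp [matA, secondCoord, vecHead, vecTail]
  rw [← toAdd.injective.eq_iff, funext_iff, Fin.forall_fin_two, e0, e1]
  grind

theorem matB_mul_secondCoord_eq_iff (k : ℤ) (v : Multiplicative (Fin 2 → ℤ))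
    (c : Multiplicative ℤ) :
    (matB k).toMulAut v * secondCoord c = v ↔ c.toAdd = k * v.toAdd 0 := by
  have e0 : ((matB k).toMulAut v * secondCoord c).toAdd 0 = v.toAdd 0 := by
    rw [toAdd_mul, Pi.add_apply, SpecialLinearGroup.toAdd_toMulAut]
    simp [matB, secondCoord, vecHead, vecTail]
  have e1 : ((matB k).toMulAut v * secondCoord c).toAdd 1 =
      -(k * v.toAdd 0) + v.toAdd 1 + c.toAdd := by
    rw [toAdd_mul, Pi.add_apply, SpecialLinearGroup.toAdd_toMulAut]
    simp [matB, secondCoord, vecHead, vecTail]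
  rw [← toAdd.injective.eq_iff, funext_iff, Fin.forall_fin_two, e0, e1]
  grind

end Shears

section FixedSubgroup

variable {G : Type*} [Group G] (f : G ≃* G) (μ : G →* Multiplicative ℤ) {k : ℤ} (hk : k ≠ 0)

theorem mem_fixedSubgroup_skewProd_matA {x : G × Multiplicative (Fin 2 → ℤ)} :
    x ∈ fixedSubgroup (f.skewProd (matA k).toMulAut (secondCoord.comp μ)).toMonoidHom ↔
      f x.1 = x.1 ∧ x.2.toAdd 1 = 0 ∧ (μ x.1).toAdd = k * x.2.toAdd 0 := by
  rw [mem_fixedSubgroup_skewProd, MonoidHom.comp_apply, matA_mul_secondCoord_eq_iff]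

theorem mem_fixedSubgroup_skewProd_matB {x : G × Multiplicative (Fin 2 → ℤ)} :
    x ∈ fixedSubgroup (f.skewProd (matB k).toMulAut (secondCoord.comp μ)).toMonoidHom ↔
      f x.1 = x.1 ∧ (μ x.1).toAdd = k * x.2.toAdd 0 := by
  rw [mem_fixedSubgroup_skewProd, MonoidHom.comp_apply, matB_mul_secondCoord_eq_iff]

def fixedSubgroupSkewProdMatAEquiv :
    fixedSubgroup (f.skewProd (matA k).toMulAut (secondCoord.comp μ)).toMonoidHom ≃*
      ↥(fixedSubgroup f.toMonoidHom ⊓ (Subgroup.zpowers (ofAdd k)).comap μ) where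
  toFun x := ⟨x.1.1, by
    obtain ⟨hf, -, hμ⟩ := (mem_fixedSubgroup_skewProd_matA f μ).1 x.2
    exact ⟨hf, mem_zpowers_ofAdd_iff.2 ⟨_, hμ⟩⟩⟩
  invFun y := ⟨(y.1, ofAdd ![(μ y.1).toAdd / k, 0]), by
    obtain ⟨hf, hμ⟩ := y.2
    refine (mem_fixedSubgroup_skewProd_matA f μ).2 ⟨hf, rfl, ?_⟩
    exact (Int.mul_ediv_cancel' (mem_zpowers_ofAdd_iff.1 hμ)).symm⟩
  left_inv x := by
    obtain ⟨-, h1, hμ⟩ := (mem_fixedSubgroup_skewProd_matA f μ).1 x.2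
    refine Subtype.ext (Prod.ext rfl (toAdd.injective (funext (Fin.forall_fin_two.2 ⟨?_, ?_⟩))))
    · simp [hμ, hk]
    · simp [h1]
  right_inv y := rfl
  map_mul' x y := rfl

def fixedSubgroupSkewProdMatBEquiv :
    fixedSubgroup (f.skewProd (matB k).toMulAut (secondCoord.comp μ)).toMonoidHom ≃*
      ↥(fixedSubgroup f.toMonoidHom ⊓ (Subgroup.zpowers (ofAdd k)).comap μ) ×
        Multiplicative ℤ where
  toFun x := (⟨x.1.1, by
    obtain ⟨hf, hμ⟩ := (mem_fixedSubgroup_skewProd_matB f μ).1 x.2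
    exact ⟨hf, mem_zpowers_ofAdd_iff.2 ⟨_, hμ⟩⟩⟩, ofAdd (x.1.2.toAdd 1))
  invFun p := ⟨(p.1.1, ofAdd ![(μ p.1.1).toAdd / k, p.2.toAdd]), by
    obtain ⟨hf, hμ⟩ := p.1.2
    refine (mem_fixedSubgroup_skewProd_matB f μ).2 ⟨hf, ?_⟩
    exact (Int.mul_ediv_cancel' (mem_zpowers_ofAdd_iff.1 hμ)).symm⟩
  left_inv x := by
    obtain ⟨-, hμ⟩ := (mem_fixedSubgroup_skewProd_matB f μ).1 x.2
    refine Subtype.ext (Prod.ext rfl (toAdd.injective (funext (Fin.forall_fin_two.2 ⟨?_, ?_⟩))))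
    · simp [hμ, hk]
    · rfl
  right_inv p := rfl
  map_mul' x y := rfl

end FixedSubgroup

section FreeFactor

open FreeGroup

variable {g n : ℕ} (h : n ≤ g) (k : ℤ)

theorem fixedSubgroup_invertOff_inf_comap_eq_map :
    fixedSubgroup (invertOff {i : Fin g | (i : ℕ) < n}).toMonoidHom ⊓
        (Subgroup.zpowers (ofAdd k)).comap (firstExponentSum g) =
      ((Subgroup.zpowers (ofAdd k)).comap (firstExponentSum n)).map (map (Fin.castLE h)) := by
  rw [fixedSubgroup_invertOff, ← Fin.range_castLE h, ← range_map, ← Subgroup.map_comap_eq,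
    Subgroup.comap_comap, firstExponentSum_comp_map_castLE]

noncomputable def fixedSubgroupInvertOffInfEquiv :
    ↥(fixedSubgroup (invertOff {i : Fin g | (i : ℕ) < n}).toMonoidHom ⊓
        (Subgroup.zpowers (ofAdd k)).comap (firstExponentSum g)) ≃*
      (Subgroup.zpowers (ofAdd k)).comap (firstExponentSum n) :=
  (MulEquiv.subgroupCongr (fixedSubgroup_invertOff_inf_comap_eq_map h k)).trans
    (Subgroup.equivMapOfInjective _ _ (map_injective (Fin.castLE_injective h))).symm

end FreeFactor

theorem stmt12 (g : ℕ) (hg : 2 ≤ g) (t : ℕ) :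
    (∃ φ : (FreeGroup (Fin g) × Multiplicative (Fin 2 → ℤ)) ≃*
           (FreeGroup (Fin g) × Multiplicative (Fin 2 → ℤ)),
        Nonempty ((fixedSubgroup φ.toMonoidHom) ≃* FreeGroup (Fin t))) ∧
    (∃ ψ : (FreeGroup (Fin g) × Multiplicative (Fin 2 → ℤ)) ≃*
           (FreeGroup (Fin g) × Multiplicative (Fin 2 → ℤ)),
        Nonempty ((fixedSubgroup ψ.toMonoidHom) ≃*
          (FreeGroup (Fin t) × Multiplicative ℤ))) := by
  obtain ⟨n, hn, k, hk, ⟨e⟩⟩ := FreeGroup.exists_comap_firstExponentSum_equiv t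
  have h : n ≤ g := hn.trans hg
  let f := FreeGroup.invertOff {i : Fin g | (i : ℕ) < n}
  let ℓ := secondCoord.comp (FreeGroup.firstExponentSum g)
  exact ⟨⟨f.skewProd (matA k).toMulAut ℓ,
      ⟨(fixedSubgroupSkewProdMatAEquiv f _ hk).trans
        ((fixedSubgroupInvertOffInfEquiv h k).trans e)⟩⟩,
    ⟨f.skewProd (matB k).toMulAut ℓ,
      ⟨(fixedSubgroupSkewProdMatBEquiv f _ hk).trans
        (((fixedSubgroupInvertOffInfEquiv h k).trans e).prodCongr (MulEquiv.refl _))⟩⟩⟩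
end

section
/- For g ≥ 2, the group F_g × ℤ contains, up to isomorphism, infinitely many fixed subgroups of endomorphisms. In particular, for every m ≥ 1, the endomorphism φ_m of F_g × ℤ defined by φ_m(u, v) = (u, γ(u) + (m+1)v), where γ : F_g → ℤ sends a₁ ↦ 1 and a_i ↦ 0 for i ≥ 2, satisfies Fix φ_m ≅ F_{m(g-1)+1}. -/
open scoped commutatorElement

/-!
Let `t = a₁` and `γ` its exponent sum. Since `ker γ` is free on the conjugates `tᵏ aᵢ t⁻ᵏ`
(`k ∈ ℤ`, `i ≥ 2`), `F_g ≅ F(ℤ × {2,…,g}) ⋊ ℤ` with `ℤ` shifting `k`. Hence `γ⁻¹(mℤ)` is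
`F(ℤ × {2,…,g}) ⋊ mℤ`; regrouping `k = qm + r` turns it into `F(ℤ × (ℤ/m × {2,…,g})) ⋊ ℤ`,
which by the same splitting is free on `1 + m(g-1)` letters. Finally `(u, v)` is fixed by
`φ_m` iff `γ u = -m v`, and as `v` is determined by `u`, `Fix φ_m ≅ γ⁻¹(mℤ)`.
-/

open Multiplicative SemidirectProduct

def FreeGroup.freeGroupCongrHom (α : Type*) : Equiv.Perm α →* MulAut (FreeGroup α) where
  toFun := FreeGroup.freeGroupCongr
  map_one' := FreeGroup.freeGroupCongr_refl
  map_mul' e f := (FreeGroup.freeGroupCongr_trans f e).symm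

section Shift

variable (ι : Type*)

def shiftPerm : Multiplicative ℤ →* Equiv.Perm (ℤ × ι) where
  toFun n := (Equiv.addRight n.toAdd).prodCongr (Equiv.refl ι)
  map_one' := by ext <;> simp
  map_mul' a b := by ext <;> simp; ring

def shiftAut : Multiplicative ℤ →* MulAut (FreeGroup (ℤ × ι)) :=
  (FreeGroup.freeGroupCongrHom _).comp (shiftPerm ι)

variable {ι} in
@[simp]
lemma shiftAut_apply_of (n : Multiplicative ℤ) (k : ℤ) (i : ι) :
    shiftAut ι n (FreeGroup.of (k, i)) = FreeGroup.of (k + n.toAdd, i) := rfl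

def exponentSumNone : FreeGroup (Option ι) →* Multiplicative ℤ :=
  FreeGroup.lift fun o => o.elim (ofAdd 1) fun _ => 1

def toShiftSemidirect :
    FreeGroup (Option ι) →* FreeGroup (ℤ × ι) ⋊[shiftAut ι] Multiplicative ℤ :=
  FreeGroup.lift fun o => o.elim (inr (ofAdd 1)) fun i => inl (.of (0, i))

def ofShiftSemidirect :
    FreeGroup (ℤ × ι) ⋊[shiftAut ι] Multiplicative ℤ →* FreeGroup (Option ι) :=
  SemidirectProduct.lift
    (FreeGroup.lift fun p =>
      .of none ^ p.1 * .of (some p.2) * (.of none ^ p.1 : FreeGroup (Option ι))⁻¹)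
    (zpowersHom _ (.of none))
    fun n => FreeGroup.ext_hom _ _ fun ⟨k, i⟩ => by
      simp only [MonoidHom.comp_apply, MulEquiv.coe_toMonoidHom, MulAut.conj_apply,
        shiftAut_apply_of, FreeGroup.lift_apply_of, zpowersHom_apply]
      group

def freeGroupOptionEquiv :
    FreeGroup (Option ι) ≃* FreeGroup (ℤ × ι) ⋊[shiftAut ι] Multiplicative ℤ :=
  MonoidHom.toMulEquiv (toShiftSemidirect ι) (ofShiftSemidirect ι)
    (by ext (_ | i) <;> simp [toShiftSemidirect, ofShiftSemidirect])
    (by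
      refine SemidirectProduct.hom_ext (FreeGroup.ext_hom _ _ fun ⟨k, i⟩ => ?_)
        (MonoidHom.ext_mint ?_)
      · simp only [MonoidHom.comp_apply, ofShiftSemidirect, lift_inl, FreeGroup.lift_apply_of,
          map_mul, map_inv, map_zpow, toShiftSemidirect, Option.elim]
        rw [← map_zpow, ← map_inv, ← inl_aut, shiftAut_apply_of]
        simp
      · simp [toShiftSemidirect, ofShiftSemidirect])

lemma rightHom_comp_freeGroupOptionEquiv :
    rightHom.comp (freeGroupOptionEquiv ι).toMonoidHom = exponentSumNone ι := by
  ext (_ | i) <;> rfl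

variable (m : ℕ) [NeZero m]

def blockEquiv : ℤ × (Fin m × ι) ≃ ℤ × ι :=
  (Equiv.prodAssoc ℤ (Fin m) ι).symm.trans ((Int.divModEquiv m).symm.prodCongr (Equiv.refl ι))

variable {ι} in
@[simp]
lemma blockEquiv_apply (q : ℤ) (r : Fin m) (i : ι) : blockEquiv ι m (q, r, i) = (q * m + r, i) :=
  rfl

def shiftSemidirectPow :
    FreeGroup (ℤ × (Fin m × ι)) ⋊[shiftAut _] Multiplicative ℤ →*
      FreeGroup (ℤ × ι) ⋊[shiftAut ι] Multiplicative ℤ :=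
  SemidirectProduct.map (FreeGroup.freeGroupCongr (blockEquiv ι m)).toMonoidHom (powMonoidHom m)
    fun n => FreeGroup.ext_hom _ _ fun ⟨q, r, i⟩ => by
      simp only [MonoidHom.comp_apply, MulEquiv.coe_toMonoidHom, FreeGroup.freeGroupCongr_apply,
        FreeGroup.map.of, shiftAut_apply_of, blockEquiv_apply, powMonoidHom_apply, toAdd_pow]
      congr 2
      simp only [nsmul_eq_mul]
      ring

lemma shiftSemidirectPow_injective : Function.Injective (shiftSemidirectPow ι m) := by
  intro x y h
  ext1
  · exact (FreeGroup.freeGroupCongr _).injective (congrArg SemidirectProduct.left h)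
  · exact IsMulTorsionFree.pow_left_injective (NeZero.ne m) (congrArg SemidirectProduct.right h)

lemma range_shiftSemidirectPow :
    (shiftSemidirectPow ι m).range = (powMonoidHom m).range.comap rightHom := by
  ext x
  constructor
  · rintro ⟨y, rfl⟩
    exact ⟨y.right, rfl⟩
  · rintro ⟨n, hn⟩
    let e := FreeGroup.freeGroupCongr (blockEquiv ι m)
    exact ⟨⟨e.symm x.left, n⟩, SemidirectProduct.ext (e.apply_symm_apply x.left) hn⟩

lemma map_freeGroupOptionEquiv_comap_exponentSumNone :
    ((powMonoidHom m).range.comap (exponentSumNone ι)).map (freeGroupOptionEquiv ι).toMonoidHom =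
      (shiftSemidirectPow ι m).range := by
  rw [range_shiftSemidirectPow, ← rightHom_comp_freeGroupOptionEquiv, ← Subgroup.comap_comap,
    Subgroup.map_comap_eq_self_of_surjective (f := (freeGroupOptionEquiv ι).toMonoidHom)
      (freeGroupOptionEquiv ι).surjective]

noncomputable def comapExponentSumNoneEquiv :
    (powMonoidHom m).range.comap (exponentSumNone ι) ≃* FreeGroup (Option (Fin m × ι)) :=
  ((freeGroupOptionEquiv ι).subgroupMap _).trans <|
    (MulEquiv.subgroupCongr (map_freeGroupOptionEquiv_comap_exponentSumNone ι m)).trans <|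
      (MonoidHom.ofInjective (shiftSemidirectPow_injective ι m)).symm.trans
        (freeGroupOptionEquiv _).symm

end Shift

section Twisted

variable {G A : Type*} [Group G] [CommGroup A] (γ : G →* A) (m : ℕ)

def twistedEndo : G × A →* G × A :=
  (MonoidHom.fst G A).prod
    (γ.comp (MonoidHom.fst G A) * (powMonoidHom (m + 1)).comp (MonoidHom.snd G A))

@[simp]
lemma twistedEndo_apply (u : G) (v : A) : twistedEndo γ m (u, v) = (u, γ u * v ^ (m + 1)) := rfl

lemma mem_fixedSubgroup_twistedEndo {x : G × A} :
    x ∈ fixedSubgroup (twistedEndo γ m) ↔ γ x.1 = x.2⁻¹ ^ m := by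
  obtain ⟨u, v⟩ := x
  change (u, γ u * v ^ (m + 1)) = (u, v) ↔ _
  rw [Prod.mk.injEq, pow_succ, ← mul_assoc, mul_eq_right, inv_pow, eq_inv_iff_mul_eq_one]
  exact and_iff_right rfl

noncomputable def fixedSubgroupTwistedEndoEquiv [IsMulTorsionFree A] [NeZero m] :
    fixedSubgroup (twistedEndo γ m) ≃* (powMonoidHom m).range.comap γ :=
  MulEquiv.ofBijective
    (((MonoidHom.fst G A).comp (fixedSubgroup (twistedEndo γ m)).subtype).codRestrict
      ((powMonoidHom m).range.comap γ)
      fun x => ⟨x.1.2⁻¹, ((mem_fixedSubgroup_twistedEndo γ m).1 x.2).symm⟩)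
    ⟨fun x y h => by
      have hu : x.1.1 = y.1.1 := congrArg Subtype.val h
      have hv : x.1.2⁻¹ ^ m = y.1.2⁻¹ ^ m := by
        rw [← (mem_fixedSubgroup_twistedEndo γ m).1 x.2,
          ← (mem_fixedSubgroup_twistedEndo γ m).1 y.2, hu]
      exact Subtype.ext <| Prod.ext hu <|
        inv_injective (IsMulTorsionFree.pow_left_injective (NeZero.ne m) hv),
     fun u => by
      obtain ⟨w, hw⟩ := u.2
      exact ⟨⟨(u.1, w⁻¹), (mem_fixedSubgroup_twistedEndo γ m).2 (by simpa using hw.symm)⟩, rfl⟩⟩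

end Twisted

section FinGenerators

variable (n : ℕ)

def exponentSumZero : FreeGroup (Fin (n + 1)) →* Multiplicative ℤ :=
  (exponentSumNone (Fin n)).comp (FreeGroup.freeGroupCongr (finSuccEquiv n)).toMonoidHom

lemma map_freeGroupCongr_comap_exponentSumZero (R : Subgroup (Multiplicative ℤ)) :
    (R.comap (exponentSumZero n)).map (FreeGroup.freeGroupCongr (finSuccEquiv n)).toMonoidHom =
      R.comap (exponentSumNone (Fin n)) := by
  rw [exponentSumZero, ← Subgroup.comap_comap,
    Subgroup.map_comap_eq_self_of_surjective (f := (FreeGroup.freeGroupCongr _).toMonoidHom)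
      (FreeGroup.freeGroupCongr _).surjective]

noncomputable def fixedSubgroupTwistedEndoEquivFreeGroup (m : ℕ) [NeZero m] :
    fixedSubgroup (twistedEndo (exponentSumZero n) m) ≃* FreeGroup (Fin (m * n + 1)) :=
  (fixedSubgroupTwistedEndoEquiv _ m).trans <|
    ((FreeGroup.freeGroupCongr (finSuccEquiv n)).subgroupMap _).trans <|
      (MulEquiv.subgroupCongr (map_freeGroupCongr_comap_exponentSumZero n _)).trans <|
        (comapExponentSumNoneEquiv (Fin n) m).trans <|
          FreeGroup.freeGroupCongr (Fintype.equivFinOfCardEq (by simp))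

end FinGenerators

theorem stmt15 (g : ℕ) (hg : 2 ≤ g) :
    (∃ f : ℕ → ((FreeGroup (Fin g) × Multiplicative ℤ) →*
                (FreeGroup (Fin g) × Multiplicative ℤ)),
      ∀ m n : ℕ, m ≠ n →
        IsEmpty ((fixedSubgroup (f m)) ≃* (fixedSubgroup (f n)))) ∧
    ∀ m : ℕ, 1 ≤ m →
      ∃ (γ : FreeGroup (Fin g) →* Multiplicative ℤ)
        (φ : (FreeGroup (Fin g) × Multiplicative ℤ) →*
             (FreeGroup (Fin g) × Multiplicative ℤ)),
        γ (FreeGroup.of ⟨0, by omega⟩) = Multiplicative.ofAdd 1 ∧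
        (∀ i : Fin g, 1 ≤ (i : ℕ) → γ (FreeGroup.of i) = 1) ∧
        (∀ (u : FreeGroup (Fin g)) (v : Multiplicative ℤ),
          φ (u, v) = (u, γ u * v ^ (m + 1))) ∧
        Nonempty ((fixedSubgroup φ) ≃* FreeGroup (Fin (m * (g - 1) + 1))) := by
  obtain ⟨n, rfl⟩ : ∃ n, g = n + 1 := ⟨g - 1, by omega⟩
  rw [Nat.add_sub_cancel]
  refine ⟨⟨fun m => twistedEndo (exponentSumZero n) (m + 1), fun m k hmk => ⟨fun e => hmk ?_⟩⟩,
    fun m hm => ?_⟩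
  · have hrank := Fintype.card_congr <| Equiv.ofFreeGroupEquiv <|
      ((fixedSubgroupTwistedEndoEquivFreeGroup n (m + 1)).symm.trans e).trans
        (fixedSubgroupTwistedEndoEquivFreeGroup n (k + 1))
    simp only [Fintype.card_fin, Nat.add_right_cancel_iff] at hrank
    exact Nat.succ_injective (Nat.eq_of_mul_eq_mul_right (by omega) hrank)
  · have : NeZero m := ⟨by omega⟩
    refine ⟨exponentSumZero n, twistedEndo (exponentSumZero n) m, rfl, ?_, fun u v => rfl,
      ⟨fixedSubgroupTwistedEndoEquivFreeGroup n m⟩⟩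
    intro i hi
    obtain ⟨j, rfl⟩ := (Fin.exists_succ_eq (x := i)).2 (by rintro rfl; simp at hi)
    rfl
end
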